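/- arXiv:1402.4299 — 6 statements merged into one kernel-verified Lean document; each statement's English description precedes it below -/
import Mathlib

section
/- Let k be a field and R a commutative k-algebra. Then the set f_R := {f ∈ R : the localization R_f of R away from f is a finitely generated k-algebra} ∪ {0} is a radical ideal of R. -/
/-!
In `R_{f+g}` the images of `f` and `g` generate the unit ideal, so `R_{f+g}` is covered by its
localizations at them; these are `R_{f(f+g)}` and `R_{g(f+g)}`, localizations of `R_f` and `R_g`
at a single element, hence of finite type over `k`. Since finite type is local on the target,
`R_{f+g}` is of finite type. The same observation `R_{fg} = (R_f)_g` gives closure under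
multiples, and `R_{f^n} = R_f` for `n ≠ 0` gives radicality.
-/

theorem Algebra.FiniteType.of_subsingleton (k A : Type*) [CommRing k] [CommRing A] [Algebra k A]
    [Subsingleton A] : Algebra.FiniteType k A :=
  .of_surjective (Algebra.ofId k A) fun _ => ⟨0, Subsingleton.elim _ _⟩

theorem IsLocalization.Away.of_pow {R : Type*} [CommRing R] (f : R) {n : ℕ} (hn : n ≠ 0)
    (S : Type*) [CommRing S] [Algebra R S] [IsLocalization.Away (f ^ n) S] :
    IsLocalization.Away f S := by
  refine IsLocalization.of_le_of_exists_dvd (.powers (f ^ n)) _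
    (Submonoid.powers_le.mpr (Submonoid.pow_mem _ (Submonoid.mem_powers f) n)) ?_
  rintro _ ⟨m, rfl⟩
  refine ⟨(f ^ n) ^ m, ⟨m, rfl⟩, ?_⟩
  rw [← pow_mul]
  exact pow_dvd_pow f (Nat.le_mul_of_pos_left m (Nat.pos_of_ne_zero hn))

section

variable {k R : Type*} [CommRing k] [CommRing R] [Algebra k R]

theorem finiteType_of_isLocalization_away_mul (f g : R)
    [Algebra.FiniteType k (Localization.Away f)] (T : Type*) [CommRing T] [Algebra k T]
    [Algebra R T] [IsScalarTower k R T]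
    [IsLocalization.Away (f * g) T] : Algebra.FiniteType k T :=
  (inferInstance : Algebra.FiniteType k
      (Localization.Away (algebraMap R (Localization.Away f) g))).equiv
    ((IsLocalization.algEquiv (.powers (f * g)) _ T).restrictScalars k)

theorem finiteType_away_add {f g : R} [Algebra.FiniteType k (Localization.Away f)]
    [Algebra.FiniteType k (Localization.Away g)] :
    Algebra.FiniteType k (Localization.Away (f + g)) := by
  set L := Localization.Away (f + g)
  have hspan : Ideal.span {algebraMap R L f, algebraMap R L g} = ⊤ := by
    refine Ideal.eq_top_of_isUnit_mem _ ?_ (IsLocalization.Away.algebraMap_isUnit (f + g))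
    rw [map_add]
    exact Ideal.add_mem _ (Ideal.subset_span (by simp)) (Ideal.subset_span (by simp))
  refine .of_span_eq_top_target _ hspan ?_
  rintro _ (rfl | rfl)
  · exact finiteType_of_isLocalization_away_mul f (f + g) _
  · exact finiteType_of_isLocalization_away_mul g (f + g) _

variable (k R) in
def finiteGenerationIdeal : Ideal R where
  carrier := {f | Algebra.FiniteType k (Localization.Away f)}
  zero_mem' := by
    have : Subsingleton (Localization.Away (0 : R)) :=
      IsLocalization.subsingleton (Submonoid.mem_powers (0 : R))
    exact .of_subsingleton k _
  add_mem' {f g} (hf : Algebra.FiniteType _ _) (hg : Algebra.FiniteType _ _) := finiteType_away_add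
  smul_mem' c f (hf : Algebra.FiniteType _ _) := by
    change Algebra.FiniteType k (Localization.Away (c * f))
    have : IsLocalization.Away (f * c) (Localization.Away (c * f)) :=
      mul_comm c f ▸ inferInstance
    exact finiteType_of_isLocalization_away_mul f c _

theorem mem_finiteGenerationIdeal {f : R} :
    f ∈ finiteGenerationIdeal k R ↔ Algebra.FiniteType k (Localization.Away f) :=
  Iff.rfl

theorem finiteGenerationIdeal_isRadical : (finiteGenerationIdeal k R).IsRadical := by
  rintro f ⟨n, hn⟩
  rcases n.eq_zero_or_pos with rfl | hpos
  · rw [pow_zero] at hn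
    simpa using (finiteGenerationIdeal k R).mul_mem_left f hn
  · have := IsLocalization.Away.of_pow f hpos.ne' (Localization.Away (f ^ n))
    exact (mem_finiteGenerationIdeal.mp hn).equiv
      ((IsLocalization.algEquiv (.powers f) _ (Localization.Away f)).restrictScalars k)

end

/-- The finite generation ideal: for a commutative `k`-algebra `R`, the set
`{f : R | R_f is a finitely generated k-algebra} ∪ {0}` is a radical ideal of `R`. -/
theorem stmt_0 (k R : Type*) [Field k] [CommRing R] [Algebra k R] :
    ∃ I : Ideal R, I.IsRadical ∧
      ∀ f : R, f ∈ I ↔ (f = 0 ∨ Algebra.FiniteType k (Localization.Away f)) :=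
  ⟨finiteGenerationIdeal k R, finiteGenerationIdeal_isRadical, fun _ =>
    ⟨Or.inr, fun h => h.elim (· ▸ Ideal.zero_mem _) id⟩⟩
end

section
/- Let k be a field and R ⊆ k[x,y] the k-subalgebra generated by the monomials x·y^m for all m ≥ 0. Then the finite generation ideal f_R of R equals m₀ := x·k[x,y], and moreover m₀ is the radical of the principal ideal x·R of R. In particular, for a nonzero f ∈ R, the localization R_f is a finitely generated k-algebra if and only if x divides f in k[x,y]. -/
open MvPolynomial

/-!
Every `r ∈ R` is `c + x q` with `c ∈ k`, `q ∈ k[x,y]`. If `f = x g`, then `x yᵐ = x (x g y / f)ᵐ`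
in `R_f`, so `R_f` is generated by `x`, `x g y / f` and `1 / f`. If `f = c + x g` with `c ≠ 0`,
send `x ↦ ε`, `y ↦ t` into the dual numbers over `k[t]`: the image of `R` lies in `k ⊕ ε k[t]`,
`f` becomes a unit, and `x yᵐ ↦ ε tᵐ`; so `R_f` maps onto `k ⊕ ε k[t]`, whose `ε`-part would be
finite-dimensional if `R_f` were finitely generated. Finally `x k[x,y] ∩ R` is prime and
`(x q)² = x · (x q²)`.
-/

/-- The subalgebra `R = k[x, xy, xy², …] ⊆ k[x,y]` generated by the monomials `x·yᵐ`. -/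
noncomputable def Rxy (k : Type*) [Field k] : Subalgebra k (MvPolynomial (Fin 2) k) :=
  Algebra.adjoin k {p | ∃ m : ℕ, p = X 0 * X 1 ^ m}

namespace TrivSqZeroExt

variable {R S M : Type*} [CommSemiring R] [CommSemiring S] [Algebra R S] [AddCommMonoid M]
  [Module S M] [Module Sᵐᵒᵖ M] [IsCentralScalar S M] [Module R M] [IsScalarTower R S M]
  [IsScalarTower R Sᵐᵒᵖ M]

def botAddSubalgebra (W : Submodule R M) : Subalgebra R (TrivSqZeroExt S M) where
  carrier := {d | d.fst ∈ (⊥ : Subalgebra R S) ∧ d.snd ∈ W}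
  mul_mem' := by
    rintro d e ⟨hd, hdW⟩ ⟨he, heW⟩
    obtain ⟨a, ha⟩ := Algebra.mem_bot.1 hd
    obtain ⟨b, hb⟩ := Algebra.mem_bot.1 he
    refine ⟨fst_mul d e ▸ Subalgebra.mul_mem _ hd he, ?_⟩
    rw [snd_mul, ← ha, ← hb, op_smul_eq_smul, algebraMap_smul, algebraMap_smul]
    exact W.add_mem (W.smul_mem a heW) (W.smul_mem b hdW)
  add_mem' := fun ⟨hd, hdW⟩ ⟨he, heW⟩ => ⟨Subalgebra.add_mem _ hd he, W.add_mem hdW heW⟩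
  algebraMap_mem' r := ⟨Subalgebra.algebraMap_mem _ r, W.zero_mem⟩

theorem exists_fg_snd_of_finiteType {A : Type*} [Semiring A] [Algebra R A]
    [Algebra.FiniteType R A] (φ : A →ₐ[R] TrivSqZeroExt S M)
    (hφ : ∀ a, (φ a).fst ∈ (⊥ : Subalgebra R S)) :
    ∃ W : Submodule R M, W.FG ∧ ∀ a, (φ a).snd ∈ W := by
  obtain ⟨T, hT⟩ := Algebra.FiniteType.out (R := R) (A := A)
  let W := Submodule.span R ((fun a => (φ a).snd) '' T)
  have hle : (⊤ : Subalgebra R A).map φ ≤ botAddSubalgebra W := by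
    rw [← hT, AlgHom.map_adjoin, Algebra.adjoin_le_iff]
    rintro _ ⟨t, ht, rfl⟩
    exact ⟨hφ t, Submodule.subset_span ⟨t, ht, rfl⟩⟩
  exact ⟨W, Submodule.fg_span (T.finite_toSet.image _), fun a => (hle ⟨a, trivial, rfl⟩).2⟩

end TrivSqZeroExt

namespace IsLocalization.Away

variable {A L : Type*} [CommSemiring A] [CommSemiring L] [Algebra A L]

theorem exists_eq_algebraMap_mul_invSelf_pow (f : A) [IsLocalization.Away f L] (z : L) :
    ∃ (n : ℕ) (a : A), z = algebraMap A L a * invSelf f ^ n := by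
  obtain ⟨n, a, hz⟩ := surj f z
  exact ⟨n, a, by rw [← hz, mul_assoc, ← mul_pow, mul_invSelf, one_pow, mul_one]⟩

theorem algHom_mem_bot {K S : Type*} [Field K] [Semiring S] [Algebra K S] [Algebra K L]
    (f : A) [IsLocalization.Away f L] (φ : L →ₐ[K] S)
    (hφ : ∀ a, φ (algebraMap A L a) ∈ (⊥ : Subalgebra K S)) (z : L) :
    φ z ∈ (⊥ : Subalgebra K S) := by
  obtain ⟨n, a, rfl⟩ := exists_eq_algebraMap_mul_invSelf_pow f z
  obtain ⟨c, hc⟩ := Algebra.mem_bot.1 (hφ f)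
  have hcu : algebraMap K S c * φ (invSelf f) = 1 := by rw [hc, ← map_mul, mul_invSelf, map_one]
  have hu : φ (invSelf f) ∈ (⊥ : Subalgebra K S) := by
    rcases eq_or_ne c 0 with rfl | hc0
    · have : Subsingleton S := subsingleton_of_zero_eq_one (by simpa using hcu)
      exact Subsingleton.elim (0 : S) (φ (invSelf f)) ▸ zero_mem _
    · rw [← one_mul (φ _), ← map_one (algebraMap K S), ← inv_mul_cancel₀ hc0, map_mul, mul_assoc,
        hcu, mul_one]
      exact algebraMap_mem _ _
  rw [map_mul, map_pow]
  exact mul_mem (hφ a) (pow_mem hu n)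

end IsLocalization.Away

section Rxy

variable {k : Type*} [Field k]

theorem X_zero_mul_X_one_pow_mem_Rxy (m : ℕ) : (X 0 * X 1 ^ m : MvPolynomial (Fin 2) k) ∈ Rxy k :=
  Algebra.subset_adjoin ⟨m, rfl⟩

theorem X_zero_mul_mem_Rxy (q : MvPolynomial (Fin 2) k) : X 0 * q ∈ Rxy k := by
  induction q using MvPolynomial.induction_on' with
  | monomial d a =>
    have hd : X 0 * monomial d a = a • ((X 0 * X 1 ^ d 1) * (X 0 * X 1 ^ 0) ^ d 0) := by
      rw [monomial_eq, Finsupp.prod_fintype _ _ fun i => pow_zero _, Fin.prod_univ_two,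
        smul_eq_C_mul]
      ring
    rw [hd]
    exact (Rxy k).smul_mem (mul_mem (X_zero_mul_X_one_pow_mem_Rxy _)
      (pow_mem (X_zero_mul_X_one_pow_mem_Rxy 0) _)) a
  | add p q hp hq => rw [mul_add]; exact add_mem hp hq

theorem mem_Rxy_iff {p : MvPolynomial (Fin 2) k} :
    p ∈ Rxy k ↔ ∃ (c : k) (q : MvPolynomial (Fin 2) k), p = C c + X 0 * q := by
  refine ⟨fun hp => ?_, fun ⟨c, q, hp⟩ => hp ▸ add_mem (algebraMap_mem _ c) (X_zero_mul_mem_Rxy q)⟩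
  induction hp using Algebra.adjoin_induction with
  | mem z hz => obtain ⟨m, rfl⟩ := hz; exact ⟨0, X 1 ^ m, by simp⟩
  | algebraMap r => exact ⟨r, 0, by simp [algebraMap_eq]⟩
  | add a b _ _ ha hb =>
    obtain ⟨c₁, q₁, rfl⟩ := ha
    obtain ⟨c₂, q₂, rfl⟩ := hb
    exact ⟨c₁ + c₂, q₁ + q₂, by rw [C_add]; ring⟩
  | mul a b _ _ ha hb =>
    obtain ⟨c₁, q₁, rfl⟩ := ha
    obtain ⟨c₂, q₂, rfl⟩ := hb
    exact ⟨c₁ * c₂, C c₁ * q₂ + C c₂ * q₁ + X 0 * (q₁ * q₂), by rw [C_mul]; ring⟩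

theorem radical_span_eq_comap_span_X_zero (x : Rxy k) (hx : (x : MvPolynomial (Fin 2) k) = X 0) :
    (Ideal.span {x}).radical = Ideal.comap (Rxy k).val.toRingHom (Ideal.span {X 0}) := by
  have hprime : (Ideal.span {(X 0 : MvPolynomial (Fin 2) k)}).IsPrime :=
    (Ideal.span_singleton_prime (X_ne_zero 0)).2 X_prime
  refine le_antisymm ((hprime.comap _).isRadical.radical_le_iff.2 ?_) fun r hr => ?_
  · rw [Ideal.span_le, Set.singleton_subset_iff, SetLike.mem_coe, Ideal.mem_comap]
    exact hx ▸ Ideal.mem_span_singleton_self _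
  · obtain ⟨p, hp⟩ := Ideal.mem_span_singleton.1 (Ideal.mem_comap.1 hr)
    refine ⟨2, Ideal.mem_span_singleton.2 ⟨⟨X 0 * p ^ 2, X_zero_mul_mem_Rxy _⟩, Subtype.ext ?_⟩⟩
    simp only [Subalgebra.coe_pow, Subalgebra.coe_mul, hx]
    rw [show ((r : Rxy k) : MvPolynomial (Fin 2) k) = X 0 * p from hp]
    ring

theorem finiteType_away_of_X_zero_dvd {f : Rxy k} (hf : X 0 ∣ (f : MvPolynomial (Fin 2) k)) :
    Algebra.FiniteType k (Localization.Away f) := by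
  obtain ⟨g, hg⟩ := hf
  let φ := IsScalarTower.toAlgHom k (Rxy k) (Localization.Away f)
  let u := IsLocalization.Away.invSelf (S := Localization.Away f) f
  have hu : φ f * u = 1 := IsLocalization.Away.mul_invSelf f
  let x : Rxy k := ⟨X 0, by simpa using X_zero_mul_X_one_pow_mem_Rxy (k := k) 0⟩
  let xgy : Rxy k := ⟨X 0 * (g * X 1), X_zero_mul_mem_Rxy _⟩
  let B := Algebra.adjoin k {φ x, φ xgy * u, u}
  have hgen (m : ℕ) : φ ⟨_, X_zero_mul_X_one_pow_mem_Rxy m⟩ = φ x * (φ xgy * u) ^ m := by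
    have hmul : (⟨_, X_zero_mul_X_one_pow_mem_Rxy m⟩ : Rxy k) * f ^ m = x * xgy ^ m :=
      Subtype.ext (by simp only [Subalgebra.coe_mul, Subalgebra.coe_pow, hg, x, xgy]; ring)
    calc φ ⟨_, X_zero_mul_X_one_pow_mem_Rxy m⟩
        = φ (⟨_, X_zero_mul_X_one_pow_mem_Rxy m⟩ * f ^ m) * u ^ m := by
          rw [map_mul, map_pow, mul_assoc, ← mul_pow, hu, one_pow, mul_one]
      _ = φ x * (φ xgy * u) ^ m := by rw [hmul, map_mul, map_pow, mul_pow, mul_assoc]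
  have hcomap : B.comap φ = ⊤ := by
    have hgens : Algebra.adjoin k (((↑) : Rxy k → MvPolynomial (Fin 2) k) ⁻¹'
        {p | ∃ m : ℕ, p = X 0 * X 1 ^ m}) = ⊤ := Algebra.adjoin_adjoin_coe_preimage
    rw [eq_top_iff, ← hgens, Algebra.adjoin_le_iff]
    rintro ⟨_, _⟩ ⟨m, rfl⟩
    rw [SetLike.mem_coe, Subalgebra.mem_comap, hgen]
    exact mul_mem (Algebra.subset_adjoin (.inl rfl))
      (pow_mem (Algebra.subset_adjoin (.inr (.inl rfl))) m)
  have hB : B = ⊤ := by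
    refine eq_top_iff.2 fun z _ => ?_
    obtain ⟨n, r, rfl⟩ := IsLocalization.Away.exists_eq_algebraMap_mul_invSelf_pow f z
    exact mul_mem (hcomap ▸ Algebra.mem_top : r ∈ B.comap φ)
      (pow_mem (Algebra.subset_adjoin (.inr (.inr rfl))) n)
  exact ⟨Subalgebra.fg_def.2 ⟨_, Set.toFinite _, hB⟩⟩

open scoped Polynomial

variable (k) in
noncomputable def dualEval : MvPolynomial (Fin 2) k →ₐ[k] DualNumber k[X] :=
  aeval ![DualNumber.eps, TrivSqZeroExt.inl Polynomial.X]

theorem fst_dualEval_C_add_X_zero_mul (c : k) (q : MvPolynomial (Fin 2) k) :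
    (dualEval k (C c + X 0 * q)).fst = Polynomial.C c := by
  simp [dualEval, TrivSqZeroExt.algebraMap_eq_inl']

theorem snd_dualEval_X_zero_mul_X_one_pow (m : ℕ) :
    (dualEval k (X 0 * X 1 ^ m)).snd = Polynomial.X ^ m := by
  simp [dualEval, TrivSqZeroExt.snd_mul]

theorem not_finiteType_away_of_not_X_zero_dvd {f : Rxy k}
    (hf : ¬ X 0 ∣ (f : MvPolynomial (Fin 2) k)) :
    ¬ Algebra.FiniteType k (Localization.Away f) := by
  intro hft
  obtain ⟨c, g, hfg⟩ := mem_Rxy_iff.1 f.2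
  have hc : c ≠ 0 := by
    rintro rfl
    exact hf ⟨g, by rw [hfg, C_0, zero_add]⟩
  let ψ₀ := (dualEval k).comp (Rxy k).val
  have hψ₀f : (ψ₀ f).fst = Polynomial.C c := by
    simp only [ψ₀, AlgHom.comp_apply, Subalgebra.coe_val, hfg, fst_dualEval_C_add_X_zero_mul]
  have hunit : IsUnit (ψ₀ f) := by
    rw [TrivSqZeroExt.isUnit_iff_isUnit_fst, hψ₀f, Polynomial.isUnit_C]
    exact hc.isUnit
  let ψ := IsLocalization.Away.liftAlgHom (S := Localization.Away f) f hunit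
  have hψ (r : Rxy k) : ψ (algebraMap _ _ r) = ψ₀ r := IsLocalization.Away.lift_eq f hunit r
  have hfst (z : Localization.Away f) : (ψ z).fst ∈ (⊥ : Subalgebra k k[X]) := by
    refine IsLocalization.Away.algHom_mem_bot f ((TrivSqZeroExt.fstHom k _ _).comp ψ) ?_ z
    intro r
    obtain ⟨a, q, hr⟩ := mem_Rxy_iff.1 r.2
    rw [AlgHom.comp_apply, hψ, TrivSqZeroExt.fstHom_apply, AlgHom.comp_apply, Subalgebra.coe_val,
      hr, fst_dualEval_C_add_X_zero_mul]
    exact Algebra.mem_bot.2 ⟨a, rfl⟩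
  obtain ⟨W, hW, hsnd⟩ := TrivSqZeroExt.exists_fg_snd_of_finiteType ψ hfst
  have hWtop : W = ⊤ := by
    rw [eq_top_iff, ← (Polynomial.basisMonomials k).span_eq, Submodule.span_le]
    rintro _ ⟨m, rfl⟩
    have := hsnd (algebraMap (Rxy k) _ ⟨_, X_zero_mul_X_one_pow_mem_Rxy m⟩)
    rwa [hψ, AlgHom.comp_apply, Subalgebra.coe_val, snd_dualEval_X_zero_mul_X_one_pow,
      Polynomial.X_pow_eq_monomial] at this
  exact Polynomial.not_finite ⟨hWtop ▸ hW⟩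

theorem finiteType_away_iff_X_zero_dvd {f : Rxy k} :
    Algebra.FiniteType k (Localization.Away f) ↔ X 0 ∣ (f : MvPolynomial (Fin 2) k) :=
  ⟨fun hft => not_not.1 fun h => not_finiteType_away_of_not_X_zero_dvd h hft,
    finiteType_away_of_X_zero_dvd⟩

end Rxy

/-- The finite generation ideal of `R` equals `m₀ = x·k[x,y]`: for a nonzero `f ∈ R`,
the localization `R_f` is a finitely generated `k`-algebra if and only if `x` divides `f`
in `k[x,y]`; and moreover `m₀` is the radical of the principal ideal `x·R` of `R`. -/
theorem stmt_4 (k : Type*) [Field k] (x : Rxy k)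
    (hx : (x : MvPolynomial (Fin 2) k) = X 0) :
    (∀ f : Rxy k, f ≠ 0 →
      (Algebra.FiniteType k (Localization.Away f) ↔
        X 0 ∣ (f : MvPolynomial (Fin 2) k))) ∧
    (Ideal.span {x}).radical =
      Ideal.comap (Rxy k).val.toRingHom (Ideal.span {X 0}) :=
  ⟨fun _ _ => finiteType_away_iff_X_zero_dvd, radical_span_eq_comap_span_X_zero x hx⟩
end

section
/- Let k be a field, A a finitely generated k-algebra that is an integral domain and is integrally closed in its fraction field, G a group acting on A by k-algebra automorphisms, and B = A^G the subalgebra of G-invariant elements. Then B is a Krull ring: inside the fraction field of B, B equals the intersection of the localizations B_p, where p ranges over all prime ideals of B of height 1. -/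
/-!
Write `x = a / b` with `a, b ∈ B = A^G`. Divisibility in `A` between invariants already holds in
`B`, so if `b ∤ a` we may choose, by noetherianity of `A`, a multiple `c` of `a` with `b ∤ c` for
which `(bA : c)` is maximal; then `𝔭 = (bB : c)` is prime and contains `(bB : a)`, so `x ∉ B_𝔭`.
To see that `𝔭` has height one, let `0 ≠ z ∈ 𝔮 ⊊ 𝔭` with `𝔮` prime. Either multiplication by
`c / b` maps `𝔭` into `𝔭`, or it maps some element of `𝔭` outside `𝔭`, and then it maps `𝔮` into
`𝔮`. Either way `z (c / b)ⁿ ∈ B` for all `n`, so `c / b` is almost integral over the noetherian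
normal domain `A`, hence lies in `A`, hence in `B`: that is, `1 ∈ 𝔭`.
-/

/-- The subalgebra of invariants `A^G` for a group `G` acting on a `k`-algebra `A` by
`k`-algebra automorphisms. -/
def fixedSubalgebra (G k A : Type*) [CommRing k] [CommRing A] [Algebra k A]
    [Monoid G] [MulSemiringAction G A] [SMulCommClass G k A] : Subalgebra k A where
  carrier := {a | ∀ g : G, g • a = a}
  mul_mem' := fun {a b} (ha : ∀ g : G, g • a = a) (hb : ∀ g : G, g • b = b) g => by
    rw [smul_mul', ha g, hb g]
  add_mem' := fun {a b} (ha : ∀ g : G, g • a = a) (hb : ∀ g : G, g • b = b) g => by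
    rw [smul_add, ha g, hb g]
  algebraMap_mem' := fun c g => by
    rw [Algebra.algebraMap_eq_smul_one, smul_comm, smul_one]

open scoped nonZeroDivisors

theorem Order.height_eq_one_of_bot_lt {α : Type*} [PartialOrder α] [OrderBot α] {x : α}
    (hx : ⊥ < x) (h : ∀ y < x, y = ⊥) : Order.height x = 1 := by
  refine le_antisymm (not_lt.mp fun h1 => ?_)
    (Order.one_le_iff_pos.mpr (Order.height_pos_of_bot_lt hx))
  obtain ⟨y, z, hzy, hyx⟩ := Order.one_lt_height_iff.mp h1
  exact not_lt_bot (h y hyx ▸ hzy)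

theorem IsIntegrallyClosed.dvd_of_forall_pow_dvd_mul_pow {R : Type*} [CommRing R] [IsDomain R]
    [IsIntegrallyClosed R] [IsNoetherianRing R] {b c z : R} (hz : z ≠ 0)
    (h : ∀ n : ℕ, b ^ n ∣ z * c ^ n) : b ∣ c := by
  rcases eq_or_ne b 0 with rfl | hb
  · have := h 1
    rw [pow_one, pow_one, zero_dvd_iff, mul_eq_zero] at this
    rw [this.resolve_left hz]
  let K := FractionRing R
  have hbK : algebraMap R K b ≠ 0 := IsFractionRing.to_map_ne_zero_of_mem_nonZeroDivisors
    (mem_nonZeroDivisors_of_ne_zero hb)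
  have hy : IsAlmostIntegral R (algebraMap R K c / algebraMap R K b) := by
    refine ⟨z, mem_nonZeroDivisors_of_ne_zero hz, fun n => ?_⟩
    obtain ⟨w, hw⟩ := h n
    refine ⟨w, ?_⟩
    rw [Algebra.smul_def, div_pow, ← mul_div_assoc, eq_div_iff (pow_ne_zero n hbK), ← map_pow,
      ← map_pow, ← map_mul, ← map_mul, hw, mul_comm]
  obtain ⟨t, ht⟩ := IsIntegrallyClosed.isIntegral_iff.mp hy.isIntegral
  refine ⟨t, IsFractionRing.injective R K ?_⟩
  rw [map_mul, ht, mul_div_cancel₀ _ hbK]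

namespace Ideal

variable {R : Type*} [CommRing R] {b c : R}

theorem mem_colon_span_singleton_iff_dvd {r : R} :
    r ∈ (span {b}).colon {c} ↔ b ∣ r * c := by
  rw [Submodule.mem_colon_singleton, smul_eq_mul, mem_span_singleton]

theorem pow_dvd_mul_pow_of_forall_mem {I : Ideal R} (hI : ∀ r ∈ I, ∃ w ∈ I, r * c = b * w)
    {z : R} (hz : z ∈ I) (n : ℕ) : b ^ n ∣ z * c ^ n := by
  suffices ∃ w ∈ I, z * c ^ n = b ^ n * w from
    let ⟨w, _, hw⟩ := this; ⟨w, hw⟩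
  induction n with
  | zero => exact ⟨z, hz, by ring⟩
  | succ n ih =>
    obtain ⟨w, hw, hzw⟩ := ih
    obtain ⟨w', hw', hww'⟩ := hI w hw
    exact ⟨w', hw', by linear_combination c * hzw + b ^ n * hww'⟩

theorem exists_ge_forall_mem_mul_eq [IsDomain R] (hb : b ≠ 0) {𝔭 𝔮 : Ideal R} [𝔮.IsPrime]
    (h𝔭 : 𝔭 ≤ (span {b}).colon {c}) (h𝔮 : 𝔮 < 𝔭) :
    ∃ I : Ideal R, 𝔮 ≤ I ∧ ∀ r ∈ I, ∃ w ∈ I, r * c = b * w := by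
  have hdvd : ∀ r ∈ 𝔭, b ∣ r * c := fun r hr => mem_colon_span_singleton_iff_dvd.mp (h𝔭 hr)
  by_cases hout : ∃ r₀ ∈ 𝔭, ∃ w₀ ∉ 𝔭, r₀ * c = b * w₀
  · obtain ⟨r₀, hr₀, w₀, hw₀, hr₀w₀⟩ := hout
    have cross : ∀ r w, r * c = b * w → r₀ * w = r * w₀ := fun r w hrw =>
      mul_left_cancel₀ hb (by linear_combination r * hr₀w₀ - r₀ * hrw)
    have hr₀𝔮 : r₀ ∉ 𝔮 := by
      intro hr₀𝔮
      obtain ⟨ρ, hρ𝔭, hρ𝔮⟩ := SetLike.exists_of_lt h𝔮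
      obtain ⟨ρ₁, hρ₁⟩ := hdvd ρ hρ𝔭
      have : ρ * w₀ ∈ 𝔮 := cross ρ ρ₁ hρ₁ ▸ 𝔮.mul_mem_right ρ₁ hr₀𝔮
      exact hw₀ (h𝔮.le (((‹𝔮.IsPrime›.mem_or_mem this).resolve_left hρ𝔮)))
    refine ⟨𝔮, le_rfl, fun σ hσ => ?_⟩
    obtain ⟨σ₁, hσ₁⟩ := hdvd σ (h𝔮.le hσ)
    have : r₀ * σ₁ ∈ 𝔮 := (cross σ σ₁ hσ₁).symm ▸ 𝔮.mul_mem_right w₀ hσ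
    exact ⟨σ₁, (‹𝔮.IsPrime›.mem_or_mem this).resolve_left hr₀𝔮, hσ₁⟩
  · push Not at hout
    refine ⟨𝔭, h𝔮.le, fun r hr => ?_⟩
    obtain ⟨w, hw⟩ := hdvd r hr
    exact ⟨w, by_contra fun hw𝔭 => hout r hr w hw𝔭 hw, hw⟩

end Ideal

section DvdClosedSubring

variable {A B : Type*} [CommRing A] [CommRing B] [Algebra B A]
  (hdvd : ∀ u w : B, algebraMap B A w ∣ algebraMap B A u → w ∣ u)
include hdvd

theorem exists_dvd_isPrime_colon [IsNoetherianRing A] {a b : B} (hab : ¬ b ∣ a) :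
    ∃ c, a ∣ c ∧ ((Ideal.span {b}).colon {c}).IsPrime := by
  have hmem : ∀ r c : B, r ∈ (Ideal.span {b}).colon {c} ↔
      algebraMap B A r ∈ (Ideal.span {algebraMap B A b}).colon {algebraMap B A c} := by
    intro r c
    rw [Ideal.mem_colon_span_singleton_iff_dvd, Ideal.mem_colon_span_singleton_iff_dvd, ← map_mul]
    exact ⟨map_dvd _, hdvd _ _⟩
  obtain ⟨_, ⟨c, ⟨hac, hbc⟩, rfl⟩, hmax⟩ := set_has_maximal_iff_noetherian.mpr inferInstance
    ((fun c => (Ideal.span {algebraMap B A b}).colon {algebraMap B A c}) ''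
      {c | a ∣ c ∧ ¬ b ∣ c}) ⟨_, a, ⟨dvd_rfl, hab⟩, rfl⟩
  refine ⟨c, hac, (Ideal.ne_top_iff_one _).mpr ?_, fun {r s} hrs => or_iff_not_imp_right.mpr ?_⟩
  · rwa [Ideal.mem_colon_span_singleton_iff_dvd, one_mul]
  intro hs
  rw [Ideal.mem_colon_span_singleton_iff_dvd] at hs hrs
  have hle : (Ideal.span {algebraMap B A b}).colon {algebraMap B A c} ≤
      (Ideal.span {algebraMap B A b}).colon {algebraMap B A (s * c)} := fun u hu => by
    rw [Ideal.mem_colon_span_singleton_iff_dvd, map_mul, mul_left_comm] at *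
    exact hu.mul_left _
  have heq := eq_of_le_of_not_lt hle (hmax _ ⟨s * c, ⟨hac.mul_left s, hs⟩, rfl⟩)
  rw [hmem, heq, ← hmem, Ideal.mem_colon_span_singleton_iff_dvd, ← mul_assoc]
  exact hrs

variable [IsDomain A] [IsIntegrallyClosed A] [IsNoetherianRing A] [IsDomain B]
  (hinj : Function.Injective (algebraMap B A))
include hinj

theorem height_colon_eq_one {b c : B} (hb : b ≠ 0) [h : ((Ideal.span {b}).colon {c}).IsPrime] :
    Order.height (⟨_, h⟩ : PrimeSpectrum B) = 1 := by
  have hb𝔭 : b ∈ (Ideal.span {b}).colon {c} :=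
    Ideal.mem_colon_span_singleton_iff_dvd.mpr (dvd_mul_right b c)
  refine Order.height_eq_one_of_bot_lt (bot_lt_iff_ne_bot.mpr fun h𝔭 => hb ?_) fun 𝔮 h𝔮 => ?_
  · have : (Ideal.span {b}).colon {c} = ⊥ := congrArg PrimeSpectrum.asIdeal h𝔭
    exact (Submodule.mem_bot B).mp (this ▸ hb𝔭)
  refine PrimeSpectrum.ext (Submodule.eq_bot_iff _ |>.mpr fun z hz => by_contra fun hz0 => ?_)
  obtain ⟨I, h𝔮I, hI⟩ := Ideal.exists_ge_forall_mem_mul_eq hb le_rfl h𝔮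
  have hbc : algebraMap B A b ∣ algebraMap B A c := by
    refine IsIntegrallyClosed.dvd_of_forall_pow_dvd_mul_pow
      ((map_ne_zero_iff _ hinj).mpr hz0) fun n => ?_
    simpa only [map_pow, map_mul] using map_dvd (algebraMap B A)
      (Ideal.pow_dvd_mul_pow_of_forall_mem hI (h𝔮I hz) n)
  exact h.ne_top ((Ideal.eq_top_iff_one _).mpr
    (Ideal.mem_colon_span_singleton_iff_dvd.mpr ((one_mul c).symm ▸ hdvd _ _ hbc)))

theorem mem_range_iff_forall_height_eq_one {K : Type*} [Field K] [Algebra B K]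
    [IsFractionRing B K] (x : K) :
    x ∈ (algebraMap B K).range ↔
      ∀ (p : Ideal B) (hp : p.IsPrime), Order.height (⟨p, hp⟩ : PrimeSpectrum B) = 1 →
        ∃ b s : B, s ∉ p ∧ x * algebraMap B K s = algebraMap B K b := by
  refine ⟨fun ⟨b, hb⟩ p hp _ => ⟨b, 1, (p.ne_top_iff_one).mp hp.ne_top, by rw [map_one, mul_one, hb]⟩,
    fun H => ?_⟩
  obtain ⟨⟨a, d⟩, hx⟩ := IsLocalization.surj B⁰ x
  dsimp only at hx
  have hd : algebraMap B K d ≠ 0 := IsFractionRing.to_map_ne_zero_of_mem_nonZeroDivisors d.2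
  by_cases hda : (d : B) ∣ a
  · obtain ⟨t, rfl⟩ := hda
    exact ⟨t, mul_right_cancel₀ hd (by rw [hx, map_mul, mul_comm])⟩
  obtain ⟨c, hac, h𝔭⟩ := exists_dvd_isPrime_colon hdvd hda
  obtain ⟨b, s, hs, hxs⟩ :=
    H _ h𝔭 (height_colon_eq_one hdvd hinj (nonZeroDivisors.ne_zero d.2))
  have hsa : s * a = d * b := IsFractionRing.injective B K <| by
    rw [map_mul, map_mul, ← hx, ← hxs]; ring
  exact absurd (Ideal.mem_colon_span_singleton_iff_dvd.mpr
    (Dvd.intro b hsa.symm |>.trans (mul_dvd_mul_left s hac))) hs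

end DvdClosedSubring

theorem fixedSubalgebra.dvd_of_coe_dvd {G k A : Type*} [CommRing k] [CommRing A] [IsDomain A]
    [Algebra k A] [Monoid G] [MulSemiringAction G A] [SMulCommClass G k A]
    {u w : fixedSubalgebra G k A} (h : (w : A) ∣ u) : w ∣ u := by
  obtain ⟨α, hα⟩ := h
  rcases eq_or_ne (w : A) 0 with hw | hw
  · exact ⟨0, Subtype.ext (by simp [hα, hw])⟩
  have hαfix : ∀ g : G, g • α = α := fun g => mul_left_cancel₀ hw <| by
    rw [← hα, ← u.2 g, hα, smul_mul', w.2 g]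
  exact ⟨⟨α, hαfix⟩, Subtype.ext hα⟩

/-- (Nagata) The ring of invariants `B = A^G` of a normal affine domain `A` over a field
`k` is a Krull ring: inside its fraction field, `B` is the intersection of the
localizations `B_p` over all height-one primes `p` of `B`. -/
theorem stmt_8 (k A G : Type*) [Field k] [CommRing A] [IsDomain A]
    [IsIntegrallyClosed A] [Algebra k A] [Algebra.FiniteType k A]
    [Group G] [MulSemiringAction G A] [SMulCommClass G k A]
    (x : FractionRing ↥(fixedSubalgebra G k A)) :
    x ∈ (algebraMap ↥(fixedSubalgebra G k A)
        (FractionRing ↥(fixedSubalgebra G k A))).range ↔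
      ∀ (p : Ideal ↥(fixedSubalgebra G k A)) (hp : p.IsPrime),
        Order.height (⟨p, hp⟩ : PrimeSpectrum ↥(fixedSubalgebra G k A)) = 1 →
        ∃ b s : ↥(fixedSubalgebra G k A), s ∉ p ∧
          x * algebraMap ↥(fixedSubalgebra G k A)
              (FractionRing ↥(fixedSubalgebra G k A)) s =
            algebraMap ↥(fixedSubalgebra G k A)
              (FractionRing ↥(fixedSubalgebra G k A)) b := by
  have : IsNoetherianRing A := Algebra.FiniteType.isNoetherianRing k A
  exact mem_range_iff_forall_height_eq_one (fun _ _ => fixedSubalgebra.dvd_of_coe_dvd)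
    Subtype.val_injective x
end

section
/- Let k be a field, A a finitely generated k-algebra that is an integral domain and integrally closed in its fraction field, G a group acting on A by k-algebra automorphisms, and B = A^G. Then for every prime ideal p of B of height 1, the contraction to B of the radical of the ideal p·A of A equals p; i.e., √(pA) ∩ B = p. (Geometrically: if S ⊆ Spec B is an irreducible closed subset of codimension 1 and H is its preimage in Spec A under the quotient morphism π, then S is the closure of π(H).) -/
/-- For `B = A^G` with `A` a normal affine domain over a field `k`, and `p` a height-one
prime of `B`, the contraction to `B` of the radical of `p·A` equals `p`; geometrically,
an irreducible codimension-one closed subset `S ⊆ Spec B` is the closure of the image of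
its preimage under the quotient morphism. -/
theorem stmt_9 (k A G : Type*) [Field k] [CommRing A] [IsDomain A]
    [IsIntegrallyClosed A] [Algebra k A] [Algebra.FiniteType k A]
    [Group G] [MulSemiringAction G A] [SMulCommClass G k A]
    (p : Ideal ↥(fixedSubalgebra G k A)) (hp : p.IsPrime)
    (h1 : Order.height (⟨p, hp⟩ : PrimeSpectrum ↥(fixedSubalgebra G k A)) = 1) :
    Ideal.comap (algebraMap ↥(fixedSubalgebra G k A) A)
      ((Ideal.map (algebraMap ↥(fixedSubalgebra G k A) A) p).radical) = p := by
  haveI := hp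
  let f : ↥(fixedSubalgebra G k A) →+* A := algebraMap ↥(fixedSubalgebra G k A) A
  have hfinj : Function.Injective f := Subtype.val_injective
  -- `p ≠ ⊥`
  have hpbot : p ≠ ⊥ := by
    intro h
    have hmin : IsMin (⟨p, hp⟩ : PrimeSpectrum ↥(fixedSubalgebra G k A)) := by
      intro y hy
      rw [← PrimeSpectrum.asIdeal_le_asIdeal]
      exact h ▸ bot_le
    rw [Order.height_eq_zero.mpr hmin] at h1
    exact zero_ne_one h1
  obtain ⟨x, hxp, hx0⟩ := Submodule.exists_mem_ne_zero_of_ne_bot hpbot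
  have hfx0 : f x ≠ 0 := fun h => hx0 (hfinj (h.trans (map_zero f).symm))
  -- image of the complement of `p`
  let T : Submonoid A := p.primeCompl.map f.toMonoidHom
  -- the key disjointness, using the `G`-action
  have hdisj : Disjoint (↑(Ideal.span {f x}) : Set A) (T : Set A) := by
    rw [Set.disjoint_left]
    rintro a ha ⟨s, hs, rfl⟩
    obtain ⟨c, hc0⟩ := Ideal.mem_span_singleton.mp ha
    have hc : (f s : A) = f x * c := hc0
    -- `c` is fixed by `G`
    have hcfix : ∀ g : G, g • c = c := by
      intro g
      have h1' : g • ((f s : A)) = f s := s.2 g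
      have h2 : g • ((f x : A)) = f x := x.2 g
      have : f x * (g • c) = f x * c := by
        calc f x * (g • c) = g • (f x * c) := by rw [smul_mul', h2]
        _ = g • (f s : A) := by rw [← hc]
        _ = f s := h1'
        _ = f x * c := hc
      exact mul_left_cancel₀ hfx0 this
    have hcB : c ∈ fixedSubalgebra G k A := hcfix
    have hs' : (s : ↥(fixedSubalgebra G k A)) = x * ⟨c, hcB⟩ := by
      apply hfinj
      rw [map_mul]
      exact hc
    exact hs (hs' ▸ p.mul_mem_right _ hxp)
  obtain ⟨P, hPprime, hPle, hPdisj⟩ :=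
    Ideal.exists_le_prime_disjoint (Ideal.span {f x}) T hdisj
  haveI := hPprime
  -- the contraction of `P`
  have hqprime : (Ideal.comap f P).IsPrime := Ideal.IsPrime.comap f
  have hxq : x ∈ Ideal.comap f P := hPle (Ideal.mem_span_singleton_self _)
  have hqle : Ideal.comap f P ≤ p := by
    intro b hb
    by_contra hbp
    exact Set.disjoint_left.mp hPdisj hb ⟨b, hbp, rfl⟩
  have hqbot : Ideal.comap f P ≠ ⊥ := by
    intro h
    rw [h] at hxq
    exact hx0 hxq
  -- by height 1, `comap f P = p`
  have hqp : Ideal.comap f P = p := by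
    by_contra hne
    have hlt : (⟨Ideal.comap f P, hqprime⟩ : PrimeSpectrum ↥(fixedSubalgebra G k A))
        < ⟨p, hp⟩ := by
      rw [lt_iff_le_and_ne]
      exact ⟨(PrimeSpectrum.asIdeal_le_asIdeal _ _).mp hqle,
        fun h => hne (congrArg PrimeSpectrum.asIdeal h)⟩
    have hle1 : Order.height (⟨p, hp⟩ : PrimeSpectrum ↥(fixedSubalgebra G k A))
        ≤ ((1 : ℕ) : ℕ∞) := by
      rw [h1]; norm_num
    have hlt1 := Order.height_le_coe_iff.mp hle1 _ hlt
    rw [Nat.cast_one, ENat.lt_one_iff_eq_zero, Order.height_eq_zero] at hlt1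
    have hbotle : (⟨⊥, Ideal.bot_prime⟩ : PrimeSpectrum ↥(fixedSubalgebra G k A))
        ≤ ⟨Ideal.comap f P, hqprime⟩ := by
      rw [← PrimeSpectrum.asIdeal_le_asIdeal]; exact bot_le
    have hle' := hlt1 hbotle
    rw [← PrimeSpectrum.asIdeal_le_asIdeal] at hle'
    exact hqbot (le_antisymm hle' bot_le)
  -- conclude
  apply le_antisymm
  · have hmapP : Ideal.map f p ≤ P := Ideal.map_le_iff_le_comap.mpr hqp.ge
    have hradP : (Ideal.map f p).radical ≤ P := by
      rw [← hPprime.radical]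
      exact Ideal.radical_mono hmapP
    exact le_trans (Ideal.comap_mono hradP) hqp.le
  · exact le_trans Ideal.le_comap_map (Ideal.comap_mono Ideal.le_radical)
end

section
/- Let k be a field of characteristic 0, n ≥ 1 an integer, and D the k-derivation of the polynomial ring k[x₀, x₁, …, x_n] determined by D(x₀) = 0 and D(x_i) = i·x_{i−1} for 1 ≤ i ≤ n (the locally nilpotent derivation arising, in suitable coordinates, from the action of the additive group on binary forms of degree n). Then for every integer m with 0 ≤ 2m ≤ n there exist nonzero scalars α₀, α₁, …, α_m ∈ k such that D(α₀·x₀x_{2m} + α₁·x₁x_{2m−1} + ⋯ + α_{m−1}·x_{m−1}x_{m+1} + α_m·x_m²) = 0. -/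
open MvPolynomial

/-- For the locally nilpotent derivation `D` of `k[x₀, …, xₙ]` with `D x₀ = 0` and
`D xᵢ = i·xᵢ₋₁` (arising from the `𝔾ₐ`-action on binary forms of degree `n`), for every
`m` with `2m ≤ n` there exist nonzero scalars `α₀, …, α_m` with
`D(α₀ x₀x_{2m} + α₁ x₁x_{2m-1} + ⋯ + α_m x_m²) = 0`. -/
theorem stmt_12 (k : Type*) [Field k] [CharZero k] (n : ℕ) (hn : 1 ≤ n)
    (D : Derivation k (MvPolynomial (Fin (n + 1)) k) (MvPolynomial (Fin (n + 1)) k))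
    (hD : ∀ i : Fin (n + 1), D (X i) =
      if _h : 0 < (i : ℕ) then
        ((i : ℕ) : MvPolynomial (Fin (n + 1)) k) *
          X ⟨(i : ℕ) - 1, lt_of_le_of_lt (Nat.sub_le _ _) i.isLt⟩
      else 0) :
    ∀ (m : ℕ) (hm : 2 * m ≤ n), ∃ α : Fin (m + 1) → k, (∀ j, α j ≠ 0) ∧
      D (∑ j : Fin (m + 1),
        C (α j) * X (⟨(j : ℕ), by have := j.isLt; omega⟩ : Fin (n + 1)) *
          X (⟨2 * m - (j : ℕ), by have := j.isLt; omega⟩ : Fin (n + 1))) = 0 := by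
  intro m hm
  set R := MvPolynomial (Fin (n + 1)) k with hR
  -- the variables, indexed by ℕ
  set x : ℕ → R := fun a => X ⟨min a n, by omega⟩ with hxdef
  have hxa : ∀ a, ∀ (h : a ≤ n), x a = X (⟨a, by omega⟩ : Fin (n + 1)) := by
    intro a h
    simp only [hxdef]
    congr 1
    exact Fin.ext (by simp [min_eq_left h])
  have hDx : ∀ a, a ≤ n → D (x a) = ((a : ℕ) : R) * x (a - 1) := by
    intro a ha
    rw [hxa a ha, hD]
    rcases Nat.eq_zero_or_pos a with h0 | h0
    · subst h0; simp
    · rw [dif_pos (by simpa using h0), hxa (a - 1) (by omega)]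
  rcases Nat.eq_zero_or_pos m with hm0 | hm1
  · -- m = 0 case
    subst hm0
    refine ⟨fun _ => 1, fun j => one_ne_zero, ?_⟩
    have h0 : (0 : ℕ) ≤ n := by omega
    rw [Fin.sum_univ_succ]
    simp only [Finset.univ_eq_empty, Finset.sum_empty, add_zero, map_one, one_mul]
    rw [show (⟨(((0 : Fin 1) : ℕ)), by omega⟩ : Fin (n + 1)) = ⟨min 0 n, by omega⟩ from
        Fin.ext (by simp),
      show (⟨2 * 0 - ((0 : Fin 1) : ℕ), by omega⟩ : Fin (n + 1)) = ⟨min 0 n, by omega⟩ from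
        Fin.ext (by simp)]
    show D (x 0 * x 0) = 0
    rw [Derivation.leibniz, hDx 0 h0]
    simp
  -- main case m ≥ 1
  -- the coefficients
  set α' : ℕ → k := fun j =>
    if j = m then ((-1) ^ m * ((2 * m).choose m : k)) / 2
    else (-1) ^ j * ((2 * m).choose j : k) with hα'
  have hα'ne : ∀ j, j ≤ m → α' j ≠ 0 := by
    intro j hj
    have hc : ∀ i, i ≤ 2 * m → ((2 * m).choose i : k) ≠ 0 := fun i hi =>
      Nat.cast_ne_zero.mpr (Nat.choose_pos hi).ne'
    simp only [hα']
    split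
    · exact div_ne_zero (mul_ne_zero (pow_ne_zero _ (by norm_num)) (hc m (by omega)))
        two_ne_zero
    · exact mul_ne_zero (pow_ne_zero _ (by norm_num)) (hc j (by omega))
  -- key binomial identity, cast to k
  have natkey : ∀ j, 1 ≤ j → j ≤ m →
      (j : k) * ((2 * m).choose j : k) = ((2 * m - (j - 1) : ℕ) : k) * ((2 * m).choose (j - 1) : k) := by
    intro j h1 h2
    have h := Nat.choose_succ_right_eq (2 * m) (j - 1)
    rw [show j - 1 + 1 = j by omega] at h
    have := congrArg (Nat.cast : ℕ → k) h
    push_cast [Nat.cast_sub (show j - 1 ≤ 2 * m by omega), Nat.cast_sub h1] at this ⊢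
    linear_combination this
  -- the telescoping function
  set G : ℕ → R := fun j =>
    if j = 0 then 0
    else C (((2 * m - (j - 1) : ℕ) : k) * α' (j - 1)) * (x (j - 1) * x (2 * m - j)) with hG
  -- per-term derivative
  have hterm : ∀ j, j ≤ m → D (C (α' j) * x j * x (2 * m - j)) =
      C ((j : k) * α' j) * (x (j - 1) * x (2 * m - j)) +
      C (((2 * m - j : ℕ) : k) * α' j) * (x j * x (2 * m - j - 1)) := by
    intro j hj
    rw [mul_assoc, ← smul_eq_C_mul, Derivation.map_smul, Derivation.leibniz,
      hDx j (by omega), hDx (2 * m - j) (by omega)]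
    rw [smul_eq_C_mul]
    simp only [smul_eq_mul, map_mul]
    rw [← map_natCast (C : k →+* R) j, ← map_natCast (C : k →+* R) (2 * m - j)]
    ring
  -- scalar identities
  have key1 : ∀ j, 1 ≤ j → j ≤ m - 1 →
      (j : k) * α' j + ((2 * m - (j - 1) : ℕ) : k) * α' (j - 1) = 0 := by
    intro j h1 h2
    have h := natkey j h1 (by omega)
    have hpow : ((-1 : k)) ^ j = (-1) ^ (j - 1) * (-1) := by
      rw [← pow_succ, show j - 1 + 1 = j by omega]
    simp only [hα', if_neg (show j ≠ m by omega), if_neg (show j - 1 ≠ m by omega)]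
    rw [hpow]
    linear_combination (-(-1 : k) ^ (j - 1)) * h
  have key2 : 2 * (m : k) * α' m + ((m + 1 : ℕ) : k) * α' (m - 1) = 0 := by
    have h := natkey m hm1 le_rfl
    rw [show 2 * m - (m - 1) = m + 1 by omega] at h
    have hpow : ((-1 : k)) ^ m = (-1) ^ (m - 1) * (-1) := by
      rw [← pow_succ, show m - 1 + 1 = m by omega]
    simp only [hα', if_pos rfl, if_neg (show m - 1 ≠ m by omega)]
    rw [hpow]
    linear_combination (-(-1 : k) ^ (m - 1)) * h
  -- telescoping step
  have hstep : ∀ j ∈ Finset.range m, D (C (α' j) * x j * x (2 * m - j)) = G (j + 1) - G j := by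
    intro j hj
    rw [Finset.mem_range] at hj
    rw [hterm j (by omega)]
    rcases Nat.eq_zero_or_pos j with h0 | h0
    · subst h0
      simp only [hG, if_neg (Nat.succ_ne_zero 0), if_pos rfl, Nat.cast_zero, zero_mul,
        map_zero, sub_zero, Nat.sub_zero, Nat.zero_sub]
      rw [show (1 : ℕ) - 1 = 0 from rfl]
      simp only [Nat.sub_zero]
      ring
    · simp only [hG, if_neg (Nat.succ_ne_zero j), if_neg (show j ≠ 0 by omega),
        Nat.add_sub_cancel]
      rw [show 2 * m - (j + 1) = 2 * m - j - 1 by omega]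
      have hc : (C ((j : k) * α' j) : R) = - C (((2 * m - (j - 1) : ℕ) : k) * α' (j - 1)) := by
        rw [← map_neg]
        exact congrArg C (by linear_combination key1 j h0 (by omega))
      rw [hc]
      ring
  -- assemble
  refine ⟨fun j => α' j, fun j => hα'ne j (by omega), ?_⟩
  have main : D (∑ j ∈ Finset.range (m + 1), C (α' j) * x j * x (2 * m - j)) = 0 := by
    rw [map_sum, Finset.sum_range_succ, Finset.sum_congr rfl hstep, Finset.sum_range_sub,
      hterm m le_rfl]
    have hG0 : G 0 = 0 := by simp [hG]
    have hGm : G m = C (((m + 1 : ℕ) : k) * α' (m - 1)) * (x (m - 1) * x m) := by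
      simp only [hG, if_neg (show m ≠ 0 by omega)]
      rw [show 2 * m - (m - 1) = m + 1 by omega, show 2 * m - m = m by omega]
    rw [hG0, hGm, show 2 * m - m = m by omega]
    have hc2 : (C (((m + 1 : ℕ) : k) * α' (m - 1)) : R) =
        - (C (((m : ℕ) : k) * α' m) + C (((m : ℕ) : k) * α' m)) := by
      rw [← map_add, ← map_neg]
      exact congrArg C (by linear_combination key2)
    rw [hc2]
    ring
  rw [← main]
  congr 1
  rw [← Fin.sum_univ_eq_sum_range (fun j => C (α' j) * x j * x (2 * m - j)) (m + 1)]
  exact Finset.sum_congr rfl fun j _ => by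
    rw [hxa (j : ℕ) (by omega), hxa (2 * m - (j : ℕ)) (by omega)]
end

section
/- Let k be a field, n ≥ 1 an integer, and a, b, c, d ∈ k with ad − bc = 1. If the polynomial identity (a·x + c·y)^n · (b·x + d·y)^n = λ · x^n y^n holds in k[x,y] for some λ ∈ k, then λ = 1 or λ = (−1)^n. (This expresses that the SL₂(k)-orbit of the binary form x^n y^n meets the line k·x^n y^n only in the orbit of x^n y^n under the Weyl group.) -/
open MvPolynomial

private lemma lin_ne_zero {k : Type*} [Field k] {s t : k} (hs : s ≠ 0) :
    (Polynomial.C s * Polynomial.X + Polynomial.C t : Polynomial k) ≠ 0 := by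
  intro h
  have := congrArg (fun p => Polynomial.coeff p 1) h
  simp at this
  exact hs this

/-- If `a, b, c, d ∈ k` satisfy `ad - bc = 1` and
`(ax + cy)ⁿ (bx + dy)ⁿ = λ xⁿ yⁿ` in `k[x,y]`, then `λ = 1` or `λ = (-1)ⁿ`:
the `SL₂(k)`-orbit of the binary form `xⁿyⁿ` meets the line `k·xⁿyⁿ` only in the orbit
of `xⁿyⁿ` under the Weyl group. -/
theorem stmt_13 (k : Type*) [Field k] (n : ℕ) (hn : 1 ≤ n) (a b c d lam : k)
    (hdet : a * d - b * c = 1)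
    (h : (C a * X 0 + C c * X 1) ^ n * (C b * X 0 + C d * X 1) ^ n
        = C lam * X 0 ^ n * X 1 ^ n) :
    lam = 1 ∨ lam = (-1) ^ n := by
  have hn0 : n ≠ 0 := by omega
  -- evaluate at x = 1, y = 1
  have heval : (a + c) ^ n * (b + d) ^ n = lam := by
    have := congrArg (eval fun _ : ℕ => (1 : k)) h
    simpa using this
  -- map to k[t] via x ↦ t, y ↦ 1
  have hφ : (Polynomial.C a * Polynomial.X + Polynomial.C c) ^ n *
      (Polynomial.C b * Polynomial.X + Polynomial.C d) ^ n
      = Polynomial.C lam * Polynomial.X ^ n := by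
    have := congrArg (aeval fun i : ℕ => if i = 0 then (Polynomial.X : Polynomial k) else 1) h
    simpa [Polynomial.algebraMap_eq] using this
  -- map to k[t] via x ↦ 1, y ↦ t
  have hψ : (Polynomial.C c * Polynomial.X + Polynomial.C a) ^ n *
      (Polynomial.C d * Polynomial.X + Polynomial.C b) ^ n
      = Polynomial.C lam * Polynomial.X ^ n := by
    have := congrArg (aeval fun i : ℕ => if i = 0 then (1 : Polynomial k) else Polynomial.X) h
    simpa [Polynomial.algebraMap_eq, add_comm] using this
  -- lam ≠ 0
  have hlam : lam ≠ 0 := by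
    intro h0
    rw [h0, map_zero, zero_mul] at hφ
    rcases mul_eq_zero.mp hφ with hz | hz <;>
      rcases pow_eq_zero_iff hn0 |>.mp hz with hz
    · have ha : a = 0 := by
        have := congrArg (fun p => Polynomial.coeff p 1) hz; simpa using this
      have hc : c = 0 := by
        have := congrArg (fun p => Polynomial.coeff p 0) hz; simpa using this
      rw [ha, hc] at hdet; simp at hdet
    · have hb : b = 0 := by
        have := congrArg (fun p => Polynomial.coeff p 1) hz; simpa using this
      have hd : d = 0 := by
        have := congrArg (fun p => Polynomial.coeff p 0) hz; simpa using this
      rw [hb, hd] at hdet; simp at hdet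
  have key : ∀ s t u v : k,
      (Polynomial.C s * Polynomial.X + Polynomial.C t) ^ n *
        (Polynomial.C u * Polynomial.X + Polynomial.C v) ^ n
        = Polynomial.C lam * Polynomial.X ^ n → s * u = 0 := by
    intro s t u v heq
    by_contra hsu
    have hs : s ≠ 0 := fun h => hsu (by rw [h, zero_mul])
    have hu : u ≠ 0 := fun h => hsu (by rw [h, mul_zero])
    have hdeg := congrArg Polynomial.natDegree heq
    rw [Polynomial.natDegree_mul (pow_ne_zero _ (lin_ne_zero hs))
        (pow_ne_zero _ (lin_ne_zero hu)),
      Polynomial.natDegree_pow, Polynomial.natDegree_pow,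
      Polynomial.natDegree_linear hs, Polynomial.natDegree_linear hu,
      Polynomial.natDegree_C_mul_X_pow _ _ hlam] at hdeg
    omega
  have hab : a * b = 0 := key a c b d hφ
  have hcd : c * d = 0 := key c a d b hψ
  rcases mul_eq_zero.mp hab with ha | hb
  · -- a = 0, so b*c = -1, b ≠ 0, c ≠ 0, hence d = 0
    rw [ha] at hdet
    have hbc : b * c = -1 := by linear_combination -hdet
    have hc : c ≠ 0 := by
      intro h0; rw [h0, mul_zero] at hbc
      exact one_ne_zero (by linear_combination hbc)
    have hd : d = 0 := by
      rcases mul_eq_zero.mp hcd with h0 | h0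
      · exact absurd h0 hc
      · exact h0
    right
    rw [ha, hd] at heval
    rw [← heval]
    rw [zero_add, add_zero, ← mul_pow]
    rw [mul_comm c b, hbc]
  · -- b = 0, so a*d = 1, a ≠ 0, d ≠ 0, hence c = 0
    rw [hb] at hdet
    have had : a * d = 1 := by linear_combination hdet
    have hd : d ≠ 0 := by
      intro h0; rw [h0, mul_zero] at had; exact one_ne_zero had.symm
    have hc : c = 0 := by
      rcases mul_eq_zero.mp hcd with h0 | h0
      · exact h0
      · exact absurd h0 hd
    left
    rw [hb, hc] at heval
    rw [← heval, add_zero, zero_add, ← mul_pow, had, one_pow]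
end
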